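/- For any weighted graph G, vertex i, and real number θ: m_θ(G∖i) = m_θ(G) + 1 if and only if there is a neighbor j of i with m_θ(G∖{i,j}) = m_θ(G∖i) − 1 (i.e., i ∈ ∞_{θ,G} if and only if some neighbor of i lies in 0_{θ,G∖i}). -/

import Mathlib

open Polynomial
open scoped Classical

/-- A matching of the weighted graph with edge weights `lam`, inside the vertex set `A`:
a set of pairs `(j,k)` with `j < k`, `lam j k ≠ 0`, endpoints in `A`,
no two pairs sharing a vertex. -/
def IsMatching {n : ℕ} (lam : Fin n → Fin n → ℝ) (A : Finset (Fin n))
    (M : Finset (Fin n × Fin n)) : Prop :=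
  (∀ e ∈ M, e.1 < e.2 ∧ lam e.1 e.2 ≠ 0 ∧ e.1 ∈ A ∧ e.2 ∈ A) ∧
  ∀ e ∈ M, ∀ f ∈ M, e ≠ f → e.1 ≠ f.1 ∧ e.1 ≠ f.2 ∧ e.2 ≠ f.1 ∧ e.2 ≠ f.2

/-- The vertices covered by a matching. -/
def mVerts {n : ℕ} (M : Finset (Fin n × Fin n)) : Finset (Fin n) :=
  M.image Prod.fst ∪ M.image Prod.snd

/-- The finite set of matchings inside the vertex set `A`. -/
noncomputable def matchings {n : ℕ} (lam : Fin n → Fin n → ℝ) (A : Finset (Fin n)) :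
    Finset (Finset (Fin n × Fin n)) :=
  Finset.univ.filter fun M => IsMatching lam A M

/-- The weighted matching polynomial of the induced weighted subgraph on the vertex set `A`
(the matching polynomial of the empty graph is `1`). -/
noncomputable def mu {n : ℕ} (r : Fin n → ℝ) (lam : Fin n → Fin n → ℝ)
    (A : Finset (Fin n)) : Polynomial ℝ :=
  ∑ M ∈ matchings lam A,
    (∏ i ∈ A \ mVerts M, (X - C (r i))) * C (∏ e ∈ M, lam e.1 e.2)

/-- The multivariate matching polynomial evaluated at the complex numbers `x 1, …, x n`. -/
noncomputable def muC {n : ℕ} (lam : Fin n → Fin n → ℝ) (x : Fin n → ℂ) : ℂ :=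
  ∑ M ∈ matchings lam (Finset.univ : Finset (Fin n)),
    (∏ i ∈ Finset.univ \ mVerts M, x i) * ∏ e ∈ M, (lam e.1 e.2 : ℂ)

/-- The constant `B_G`: for `n ≥ 3` the maximum over vertices `j` and sets
`A ⊆ [n] ∖ {j}` with `|A| = n - 2` of `∑_{k ∈ A} (-λ_{jk})`; `-λ_{12}/4` for `n = 2`;
`0` for `n = 1`. -/
noncomputable def BG (n : ℕ) (lam : Fin n → Fin n → ℝ) : ℝ :=
  if 3 ≤ n then
    sSup {S : ℝ | ∃ j : Fin n, ∃ A : Finset (Fin n),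
      j ∉ A ∧ A.card = n - 2 ∧ S = ∑ k ∈ A, -lam j k}
  else if h : n = 2 then -lam ⟨0, by omega⟩ ⟨1, by omega⟩ / 4
  else 0

/-- `l` is a path from `i` to `j` inside the vertex set `A`: a nonempty list of distinct
vertices of `A`, starting at `i`, ending at `j`, with consecutive vertices joined by
edges of nonzero weight. -/
def IsPathIn {n : ℕ} (lam : Fin n → Fin n → ℝ) (A : Finset (Fin n)) (i j : Fin n)
    (l : List (Fin n)) : Prop :=
  l ≠ [] ∧ l.Nodup ∧ (∀ v ∈ l, v ∈ A) ∧ l.head? = some i ∧ l.getLast? = some j ∧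
    l.Chain' fun u v => lam u v ≠ 0

/-- `λ_c`: the product of `-λ_e` over the edges `e` of the path `c` (equal to `1` for a
trivial path). -/
def pathWeight {n : ℕ} (lam : Fin n → Fin n → ℝ) (l : List (Fin n)) : ℝ :=
  ((l.zip l.tail).map fun p => -lam p.1 p.2).prod

/-- A real polynomial viewed as a rational function. -/
noncomputable def toRF (p : Polynomial ℝ) : RatFunc ℝ :=
  algebraMap (Polynomial ℝ) (RatFunc ℝ) p

/-- The graph continued fraction `α_v = μ(A)/μ(A ∖ v)` as a rational function. -/
noncomputable def alpha {n : ℕ} (r : Fin n → ℝ) (lam : Fin n → Fin n → ℝ) (v : Fin n)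
    (A : Finset (Fin n)) : RatFunc ℝ :=
  toRF (mu r lam A) / toRF (mu r lam (A.erase v))

/-- `λ_{i∼j} = -(∑_{c ∈ [i→j]} λ_c · μ(A∖c)²) / μ(A∖{i,j})²` as a rational function. -/
noncomputable def lamSim {n : ℕ} (r : Fin n → ℝ) (lam : Fin n → Fin n → ℝ) (i j : Fin n)
    (A : Finset (Fin n)) : RatFunc ℝ :=
  -(∑ᶠ l ∈ {l : List (Fin n) | IsPathIn lam A i j l},
      toRF (C (pathWeight lam l) * mu r lam (A \ l.toFinset) ^ 2)) /
    toRF (mu r lam ((A.erase i).erase j)) ^ 2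

/-- The value of a rational function at `θ`, taken after cancelling common factors;
`none` encodes the value `∞` (a pole). -/
noncomputable def valAt (f : RatFunc ℝ) (θ : ℝ) : Option ℝ :=
  if f.denom.eval θ = 0 then none else some (f.num.eval θ / f.denom.eval θ)

/-- The set `0_{θ,A}` of θ-essential vertices: `m_θ(A∖v) = m_θ(A) - 1`. -/
def zeroSet {n : ℕ} (r : Fin n → ℝ) (lam : Fin n → Fin n → ℝ) (θ : ℝ)
    (A : Finset (Fin n)) : Set (Fin n) :=
  {v | v ∈ A ∧
    (mu r lam A).rootMultiplicity θ = (mu r lam (A.erase v)).rootMultiplicity θ + 1}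

/-- The set `∞_{θ,A}`: `m_θ(A∖v) = m_θ(A) + 1`. -/
def infSet {n : ℕ} (r : Fin n → ℝ) (lam : Fin n → Fin n → ℝ) (θ : ℝ)
    (A : Finset (Fin n)) : Set (Fin n) :=
  {v | v ∈ A ∧
    (mu r lam (A.erase v)).rootMultiplicity θ = (mu r lam A).rootMultiplicity θ + 1}

/-- The set `+_{θ,A}`: `m_θ(A∖v) = m_θ(A)` and `α_v(A)(θ) > 0`. -/
def plusSet {n : ℕ} (r : Fin n → ℝ) (lam : Fin n → Fin n → ℝ) (θ : ℝ)
    (A : Finset (Fin n)) : Set (Fin n) :=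
  {v | v ∈ A ∧
    (mu r lam (A.erase v)).rootMultiplicity θ = (mu r lam A).rootMultiplicity θ ∧
    ∃ t : ℝ, valAt (alpha r lam v A) θ = some t ∧ 0 < t}

/-- The set `−_{θ,A}`: `m_θ(A∖v) = m_θ(A)` and `α_v(A)(θ) < 0`. -/
def minusSet {n : ℕ} (r : Fin n → ℝ) (lam : Fin n → Fin n → ℝ) (θ : ℝ)
    (A : Finset (Fin n)) : Set (Fin n) :=
  {v | v ∈ A ∧
    (mu r lam (A.erase v)).rootMultiplicity θ = (mu r lam A).rootMultiplicity θ ∧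
    ∃ t : ℝ, valAt (alpha r lam v A) θ = some t ∧ t < 0}

/-- The frontier `∂0_{θ,A}`: vertices not in `0_{θ,A}` with a neighbor in `0_{θ,A}`. -/
def frontierZero {n : ℕ} (r : Fin n → ℝ) (lam : Fin n → Fin n → ℝ) (θ : ℝ)
    (A : Finset (Fin n)) : Set (Fin n) :=
  {v | v ∈ A ∧ v ∉ zeroSet r lam θ A ∧ ∃ w ∈ zeroSet r lam θ A, lam v w ≠ 0}

/-- The underlying simple graph: edges are the pairs with nonzero edge weight. -/
def wGraph {n : ℕ} (lam : Fin n → Fin n → ℝ) : SimpleGraph (Fin n) :=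
  SimpleGraph.fromRel fun j k => lam j k ≠ 0

/-!
Two facts drive the proof. The first is the vertex recurrence
`μ(A) = (x - r_i) μ(A∖i) + ∑_j λ_ij μ(A∖{i,j})`. The second: since every `λ_ij ≤ 0`, the
recurrence shows by induction on `A` that `z ↦ μ(A)(z) / μ(A∖i)(z)` maps the upper half-plane
into itself. Looking at this quotient along the rays `θ + t w`, `t → 0⁺`, forces
`m_θ(A) ≤ m_θ(A∖i) + 1` (and symmetrically), and in the case of equality the lowest Taylor
coefficients of `μ(A)` and `μ(A∖i)` at `θ` have the same sign.

Now compare the Taylor coefficients of order `N = m_θ(A∖i) - 1` at `θ` in the recurrence. The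
first term contributes nothing, so the coefficient of `μ(A)` is `∑_j λ_ij c_N(μ(A∖{i,j}))`, where
only the `j` with `m_θ(A∖{i,j}) = N` contribute, all with the same sign. Hence it is nonzero, i.e.
`m_θ(A) = N`, exactly when such a neighbour `j` of `i` exists.
-/

namespace Polynomial

variable {R : Type*} [CommRing R] {p : R[X]} {a : R}

lemma rootMultiplicity_neg (p : R[X]) (a : R) :
    (-p).rootMultiplicity a = p.rootMultiplicity a := by
  simp only [rootMultiplicity_eq_natTrailingDegree, neg_comp, natTrailingDegree_neg]

lemma taylor_coeff_eq_zero_of_pow_dvd {k n : ℕ} (h : (X - C a) ^ k ∣ p) (hn : n < k) :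
    (taylor a p).coeff n = 0 := by
  obtain ⟨s, rfl⟩ := h
  refine X_pow_dvd_iff.1 ?_ n hn
  simp [taylor_mul, taylor_pow, taylor_X]

lemma taylor_coeff_rootMultiplicity (p : R[X]) (a : R) :
    (taylor a p).coeff (p.rootMultiplicity a) = (taylor a p).trailingCoeff := by
  rw [rootMultiplicity_eq_natTrailingDegree, ← taylor_apply]
  rfl

lemma rootMultiplicity_le_of_taylor_coeff_ne_zero {n : ℕ} (h : (taylor a p).coeff n ≠ 0) :
    p.rootMultiplicity a ≤ n := by
  rw [rootMultiplicity_eq_natTrailingDegree, ← taylor_apply]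
  exact natTrailingDegree_le_of_ne_zero h

lemma trailingCoeff_taylor_ne_zero (hp : p ≠ 0) : (taylor a p).trailingCoeff ≠ 0 := by
  rwa [ne_eq, trailingCoeff_eq_zero, taylor_eq_zero]

lemma exists_eq_pow_rootMultiplicity_mul_and_eval_eq_trailingCoeff (p : R[X]) (a : R) :
    ∃ p₁ : R[X], p = (X - C a) ^ p.rootMultiplicity a * p₁ ∧
      p₁.eval a = (taylor a p).trailingCoeff := by
  refine ⟨_, (pow_mul_divByMonic_rootMultiplicity_eq p a).symm, ?_⟩
  rw [eval_divByMonic_eq_trailingCoeff_comp, taylor_apply]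

end Polynomial

open Complex in
lemma eq_one_and_pos_of_forall_im_pow_mul_nonneg {k : ℕ} {c : ℝ} (hk : 0 < k) (hc : c ≠ 0)
    (h : ∀ w : ℂ, 0 < w.im → 0 ≤ (w ^ k).im * c) : k = 1 ∧ 0 < c := by
  have hk' : (0 : ℝ) < k := Nat.cast_pos.2 hk
  -- test `h` on `w = exp (i φ / k)`, so that `w ^ k = exp (i φ)`
  have hsin : ∀ φ : ℝ, 0 < φ → φ < k * Real.pi → 0 ≤ Real.sin φ * c := fun φ h0 h1 => by
    have hw : 0 < (exp ((φ / k : ℝ) * I)).im := by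
      rw [exp_ofReal_mul_I_im]
      exact Real.sin_pos_of_pos_of_lt_pi (by positivity) (by rwa [div_lt_iff₀' hk'])
    have := h _ hw
    rwa [← exp_nat_mul, ← mul_assoc, ← ofReal_natCast, ← ofReal_mul, mul_div_cancel₀ _ hk'.ne',
      exp_ofReal_mul_I_im] at this
  have hc : 0 < c := by
    have hk1 : (1 : ℝ) ≤ k := Nat.one_le_cast.2 hk
    have := hsin (Real.pi / 2) (by positivity) (by nlinarith [Real.pi_pos])
    rw [Real.sin_pi_div_two, one_mul] at this
    exact lt_of_le_of_ne this (Ne.symm hc)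
  refine ⟨?_, hc⟩
  by_contra hk1
  have hk2 : (2 : ℝ) ≤ k := by exact_mod_cast (by omega : 2 ≤ k)
  have := hsin (Real.pi / 2 + Real.pi) (by positivity) (by nlinarith [Real.pi_pos])
  rw [Real.sin_add_pi, Real.sin_pi_div_two] at this
  linarith

lemma Complex.im_ofReal_div_nonneg {c : ℝ} {w : ℂ} (hc : c ≤ 0) (hw : 0 ≤ w.im) :
    0 ≤ ((c : ℂ) / w).im := by
  rw [Complex.div_im, Complex.ofReal_im, Complex.ofReal_re, zero_mul, zero_div, zero_sub,
    neg_nonneg]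
  exact div_nonpos_of_nonpos_of_nonneg (mul_nonpos_of_nonpos_of_nonneg hc hw)
    (Complex.normSq_nonneg _)

section LocalHerglotz

variable {p q : ℝ[X]}

lemma ne_zero_of_forall_im_div_pos (H : ∀ z : ℂ, 0 < z.im → 0 < (aeval z p / aeval z q).im) :
    p ≠ 0 ∧ q ≠ 0 := by
  have := H Complex.I (by simp)
  constructor <;> rintro rfl <;> simp at this

lemma im_pow_mul_nonneg_of_forall_im_div_pos
    (H : ∀ z : ℂ, 0 < z.im → 0 < (aeval z p / aeval z q).im) {θ : ℝ}
    (hle : q.rootMultiplicity θ ≤ p.rootMultiplicity θ) {w : ℂ} (hw : 0 < w.im) :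
    0 ≤ (w ^ (p.rootMultiplicity θ - q.rootMultiplicity θ)).im *
      ((taylor θ p).trailingCoeff / (taylor θ q).trailingCoeff) := by
  obtain ⟨p₁, hp, hp₁⟩ := exists_eq_pow_rootMultiplicity_mul_and_eval_eq_trailingCoeff p θ
  obtain ⟨q₁, hq, hq₁⟩ := exists_eq_pow_rootMultiplicity_mul_and_eval_eq_trailingCoeff q θ
  set m := p.rootMultiplicity θ
  set m' := q.rootMultiplicity θ
  set k := m - m'
  have hval : ∀ s : ℝ[X], aeval (θ : ℂ) s = ((s.eval θ : ℝ) : ℂ) := fun s => by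
    simpa using aeval_algebraMap_apply ℂ θ s
  have hq₁0 : aeval (θ : ℂ) q₁ ≠ 0 := by
    rw [hval, hq₁, Complex.ofReal_ne_zero, trailingCoeff_nonzero_iff_nonzero, ne_eq,
      taylor_eq_zero]
    exact (ne_zero_of_forall_im_div_pos H).2
  -- along `θ + t w`, the quotient `p / q` equals `t ^ k * F t`
  set F : ℝ → ℂ := fun t => w ^ k * (aeval (θ + t * w : ℂ) p₁ / aeval (θ + t * w : ℂ) q₁)
  have hF : ∀ t : ℝ, 0 < t → 0 < (F t).im := fun t ht => by
    have hz : 0 < ((θ : ℂ) + t * w).im := by simpa using mul_pos ht hw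
    have htw : (t : ℂ) * w ≠ 0 := mul_ne_zero (by exact_mod_cast ht.ne') (by rintro rfl; simp at hw)
    have hquot : aeval (θ + t * w : ℂ) p / aeval (θ + t * w : ℂ) q = ((t ^ k : ℝ) : ℂ) * F t := by
      rw [hp, hq]
      simp only [map_mul, map_pow, map_sub, aeval_X, aeval_C, Complex.coe_algebraMap,
        add_sub_cancel_left]
      rw [show m = m' + k by omega, pow_add, mul_assoc, mul_div_mul_left _ _ (pow_ne_zero _ htw)]
      simp only [F]
      push_cast
      ring
    have := H _ hz
    rw [hquot, Complex.im_ofReal_mul] at this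
    exact pos_of_mul_pos_right this (by positivity)
  have hcont : ContinuousAt F 0 := by
    fun_prop (disch := simpa using hq₁0)
  have hF0 : 0 ≤ (F 0).im :=
    ge_of_tendsto ((Complex.continuous_im.tendsto _).comp
        (hcont.tendsto.mono_left (nhdsWithin_le_nhds (s := Set.Ioi 0))))
      (eventually_nhdsWithin_of_forall fun t ht => (hF t ht).le)
  have hF0' :
      F 0 = w ^ k * (((taylor θ p).trailingCoeff / (taylor θ q).trailingCoeff : ℝ) : ℂ) := by
    simp [F, hval, hp₁, hq₁]
  rwa [hF0', Complex.im_mul_ofReal] at hF0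

lemma rootMultiplicity_sub_eq_one_and_pos_of_forall_im_div_pos
    (H : ∀ z : ℂ, 0 < z.im → 0 < (aeval z p / aeval z q).im) {θ : ℝ}
    (hlt : q.rootMultiplicity θ < p.rootMultiplicity θ) :
    p.rootMultiplicity θ - q.rootMultiplicity θ = 1 ∧
      0 < (taylor θ p).trailingCoeff / (taylor θ q).trailingCoeff := by
  obtain ⟨hp, hq⟩ := ne_zero_of_forall_im_div_pos H
  exact eq_one_and_pos_of_forall_im_pow_mul_nonneg (by omega)
    (div_ne_zero (trailingCoeff_taylor_ne_zero hp) (trailingCoeff_taylor_ne_zero hq))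
    fun w hw => im_pow_mul_nonneg_of_forall_im_div_pos H hlt.le hw

theorem rootMultiplicity_le_add_one_of_forall_im_div_pos
    (H : ∀ z : ℂ, 0 < z.im → 0 < (aeval z p / aeval z q).im) (θ : ℝ) :
    p.rootMultiplicity θ ≤ q.rootMultiplicity θ + 1 := by
  by_contra! h
  have := (rootMultiplicity_sub_eq_one_and_pos_of_forall_im_div_pos H (θ := θ) (by omega)).1
  omega

theorem trailingCoeff_taylor_mul_pos_of_forall_im_div_pos
    (H : ∀ z : ℂ, 0 < z.im → 0 < (aeval z p / aeval z q).im) {θ : ℝ}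
    (h : p.rootMultiplicity θ = q.rootMultiplicity θ + 1) :
    0 < (taylor θ p).trailingCoeff * (taylor θ q).trailingCoeff := by
  have := (rootMultiplicity_sub_eq_one_and_pos_of_forall_im_div_pos H (θ := θ) (by omega)).2
  rcases div_pos_iff.1 this with ⟨ha, hb⟩ | ⟨ha, hb⟩
  · exact mul_pos ha hb
  · exact mul_pos_of_neg_of_neg ha hb

end LocalHerglotz

section Matchings

open Finset

variable {n : ℕ} {r : Fin n → ℝ} {lam : Fin n → Fin n → ℝ} {A : Finset (Fin n)}
  {M N : Finset (Fin n × Fin n)} {e : Fin n × Fin n} {i j k : Fin n}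

lemma mem_matchings : M ∈ matchings lam A ↔ IsMatching lam A M := by
  simp [matchings]

lemma mem_mVerts {v : Fin n} : v ∈ mVerts M ↔ ∃ e ∈ M, e.1 = v ∨ e.2 = v := by
  simp only [mVerts, mem_union, mem_image]
  grind

lemma mVerts_insert : mVerts (insert e M) = insert e.1 (insert e.2 (mVerts M)) := by
  ext v
  simp only [mVerts, image_insert, mem_union, mem_insert]
  tauto

lemma isMatching_iff_subset :
    IsMatching lam A M ↔ IsMatching lam univ M ∧ mVerts M ⊆ A := by
  simp only [IsMatching, subset_iff, mem_mVerts, mem_univ, and_true]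
  grind

lemma mem_matchings_erase :
    M ∈ matchings lam (A.erase i) ↔ M ∈ matchings lam A ∧ i ∉ mVerts M := by
  rw [mem_matchings, mem_matchings, isMatching_iff_subset, isMatching_iff_subset (A := A),
    subset_erase, and_assoc]

lemma isMatching_insert_iff (he : e ∉ M) :
    IsMatching lam A (insert e M) ↔ (e.1 < e.2 ∧ lam e.1 e.2 ≠ 0 ∧ e.1 ∈ A ∧ e.2 ∈ A) ∧
      e.1 ∉ mVerts M ∧ e.2 ∉ mVerts M ∧ IsMatching lam A M := by
  simp only [IsMatching, mem_mVerts, forall_mem_insert]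
  grind

def sortedPair {n : ℕ} (i j : Fin n) : Fin n × Fin n := (min i j, max i j)

lemma sortedPair_cases : sortedPair i j = (i, j) ∨ sortedPair i j = (j, i) := by
  rcases le_total i j with h | h <;> simp [sortedPair, h]

lemma lam_sortedPair (hsym : ∀ j k, lam j k = lam k j) :
    lam (sortedPair i j).1 (sortedPair i j).2 = lam i j := by
  rcases sortedPair_cases (i := i) (j := j) with h | h <;> simp [h, hsym j i]

lemma mVerts_insert_sortedPair :
    mVerts (insert (sortedPair i j) M) = insert i (insert j (mVerts M)) := by
  rcases sortedPair_cases (i := i) (j := j) with h | h <;> rw [mVerts_insert, h]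
  exact insert_comm _ _ _

lemma sortedPair_notMem (h : i ∉ mVerts M) : sortedPair i j ∉ M := fun hM =>
  h (by rcases sortedPair_cases (i := i) (j := j) with h | h <;>
    exact mem_mVerts.2 ⟨_, hM, by simp [h]⟩)

lemma sortedPair_inj (h : sortedPair i j = sortedPair i k) : j = k := by
  rcases sortedPair_cases (i := i) (j := j) with h1 | h1 <;>
    rcases sortedPair_cases (i := i) (j := k) with h2 | h2 <;>
    · rw [h1, h2] at h
      simp only [Prod.mk.injEq] at h
      grind

lemma exists_eq_sortedPair (h : e.1 = i ∨ e.2 = i) (hlt : e.1 < e.2) :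
    ∃ j, e = sortedPair i j := by
  rcases h with rfl | rfl
  · exact ⟨e.2, by simp [sortedPair, hlt.le]⟩
  · exact ⟨e.1, by simp [sortedPair, hlt.le]⟩

lemma insert_sortedPair_mem_matchings (hsym : ∀ j k, lam j k = lam k j) (hij : i ≠ j)
    (hi : i ∈ A) (hj : j ∈ A) (hlam : lam i j ≠ 0)
    (hM : M ∈ matchings lam ((A.erase i).erase j)) :
    insert (sortedPair i j) M ∈ matchings lam A := by
  rw [mem_matchings_erase, mem_matchings_erase] at hM
  obtain ⟨⟨hM, hiM⟩, hjM⟩ := hM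
  rw [mem_matchings] at hM ⊢
  rw [isMatching_insert_iff (sortedPair_notMem hiM), lam_sortedPair hsym]
  refine ⟨⟨min_lt_max.2 hij, hlam, ?_⟩, ?_⟩ <;>
    rcases sortedPair_cases (i := i) (j := j) with h | h <;> simp [h, hi, hj, hiM, hjM, hM]

lemma exists_insert_sortedPair_eq (hsym : ∀ j k, lam j k = lam k j)
    (hM : M ∈ matchings lam A) (hiM : i ∈ mVerts M) :
    ∃ j ∈ A.erase i, lam i j ≠ 0 ∧
      ∃ M' ∈ matchings lam ((A.erase i).erase j), insert (sortedPair i j) M' = M := by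
  obtain ⟨e, he, hie⟩ := mem_mVerts.1 hiM
  rw [mem_matchings, ← insert_erase he, isMatching_insert_iff (notMem_erase e M)] at hM
  obtain ⟨⟨hlt, hlam, he₁, he₂⟩, he₁M, he₂M, hM'⟩ := hM
  obtain ⟨j, rfl⟩ := exists_eq_sortedPair hie hlt
  have hij : i ≠ j := fun h => by simp [sortedPair, h] at hlt
  rw [lam_sortedPair hsym] at hlam
  have hjA : j ∈ A := by
    rcases sortedPair_cases (i := i) (j := j) with h | h <;> simp_all
  have hM'' : M.erase (sortedPair i j) ∈ matchings lam ((A.erase i).erase j) := by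
    rw [mem_matchings_erase, mem_matchings_erase, mem_matchings]
    rcases sortedPair_cases (i := i) (j := j) with h | h <;> simp_all
  exact ⟨j, mem_erase.2 ⟨hij.symm, hjA⟩, hlam, _, hM'', insert_erase he⟩

lemma notMem_mVerts_of_mem_matchings_erase_erase
    (hM : M ∈ matchings lam ((A.erase i).erase j)) : i ∉ mVerts M :=
  (mem_matchings_erase.1 (mem_matchings_erase.1 hM).1).2

lemma insert_sortedPair_inj (hiM : i ∉ mVerts M) (hiN : i ∉ mVerts N)
    (h : insert (sortedPair i j) M = insert (sortedPair i k) N) : j = k ∧ M = N := by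
  have hjk : sortedPair i j = sortedPair i k := by
    have := h ▸ mem_insert_self (sortedPair i j) M
    exact (mem_insert.1 this).resolve_right (sortedPair_notMem hiN)
  refine ⟨sortedPair_inj hjk, ?_⟩
  rw [← erase_insert (sortedPair_notMem (j := j) hiM), h, hjk, erase_insert (sortedPair_notMem hiN)]

noncomputable def matchingWeight {n : ℕ} (r : Fin n → ℝ) (lam : Fin n → Fin n → ℝ)
    (A : Finset (Fin n)) (M : Finset (Fin n × Fin n)) : ℝ[X] :=
  (∏ v ∈ A \ mVerts M, (X - C (r v))) * C (∏ e ∈ M, lam e.1 e.2)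

lemma mu_eq_sum_matchingWeight :
    mu r lam A = ∑ M ∈ matchings lam A, matchingWeight r lam A M := rfl

lemma matchingWeight_of_notMem (hi : i ∈ A) (hiM : i ∉ mVerts M) :
    matchingWeight r lam A M = (X - C (r i)) * matchingWeight r lam (A.erase i) M := by
  have hsdiff : A \ mVerts M = insert i (A.erase i \ mVerts M) := by
    rw [erase_sdiff_comm, insert_erase (mem_sdiff.2 ⟨hi, hiM⟩)]
  rw [matchingWeight, matchingWeight, hsdiff, prod_insert (by simp), mul_assoc]

lemma matchingWeight_insert_sortedPair (hsym : ∀ j k, lam j k = lam k j)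
    (hiM : i ∉ mVerts M) :
    matchingWeight r lam A (insert (sortedPair i j) M) =
      C (lam i j) * matchingWeight r lam ((A.erase i).erase j) M := by
  have hsdiff : A \ mVerts (insert (sortedPair i j) M) = (A.erase i).erase j \ mVerts M := by
    rw [mVerts_insert_sortedPair, sdiff_insert, sdiff_insert, erase_sdiff_comm,
      erase_sdiff_comm, erase_right_comm]
  rw [matchingWeight, matchingWeight, hsdiff, prod_insert (sortedPair_notMem hiM),
    lam_sortedPair hsym, C_mul]
  ring

lemma sum_matchingWeight_notMem (hi : i ∈ A) :
    ∑ M ∈ (matchings lam A).filter (i ∉ mVerts ·), matchingWeight r lam A M =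
      (X - C (r i)) * mu r lam (A.erase i) := by
  have hfilter : (matchings lam A).filter (i ∉ mVerts ·) = matchings lam (A.erase i) := by
    ext M
    rw [mem_filter, mem_matchings_erase]
  rw [hfilter, mu, mul_sum]
  refine sum_congr rfl fun M hM => matchingWeight_of_notMem hi ?_
  exact (mem_matchings_erase.1 hM).2

lemma sum_matchingWeight_mem (hsym : ∀ j k, lam j k = lam k j) (hi : i ∈ A) :
    ∑ M ∈ (matchings lam A).filter (i ∈ mVerts ·), matchingWeight r lam A M =
      ∑ j ∈ A.erase i, C (lam i j) * mu r lam ((A.erase i).erase j) := by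
  have hne : ∑ j ∈ (A.erase i).filter (lam i · ≠ 0), C (lam i j) * mu r lam ((A.erase i).erase j)
      = ∑ j ∈ A.erase i, C (lam i j) * mu r lam ((A.erase i).erase j) :=
    sum_filter_of_ne fun j _ h hj => h (by rw [hj, C_0, zero_mul])
  rw [← hne]
  simp only [mu_eq_sum_matchingWeight, mul_sum]
  rw [sum_sigma']
  symm
  refine sum_nbij (fun x => insert (sortedPair i x.1) x.2) ?_ ?_ ?_ ?_
  · rintro ⟨j, M⟩ hx
    simp only [mem_sigma, mem_filter, mem_erase] at hx
    obtain ⟨⟨⟨hji, hj⟩, hlam⟩, hM⟩ := hx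
    simp only [mem_filter, mVerts_insert_sortedPair, mem_insert_self, and_true]
    exact insert_sortedPair_mem_matchings hsym (Ne.symm hji) hi hj hlam hM
  · rintro ⟨j, M⟩ hx ⟨k, N⟩ hy h
    simp only [coe_sigma, Set.mem_sigma_iff, mem_coe] at hx hy
    obtain ⟨hjk, hMN⟩ := insert_sortedPair_inj (notMem_mVerts_of_mem_matchings_erase_erase hx.2)
      (notMem_mVerts_of_mem_matchings_erase_erase hy.2) h
    subst hjk hMN
    rfl
  · intro M hM
    simp only [coe_filter] at hM
    obtain ⟨j, hj, hlam, M', hM', rfl⟩ := exists_insert_sortedPair_eq hsym hM.1 hM.2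
    refine ⟨⟨j, M'⟩, ?_, rfl⟩
    simp only [coe_sigma, Set.mem_sigma_iff, mem_coe, mem_filter]
    exact ⟨⟨hj, hlam⟩, hM'⟩
  · rintro ⟨j, M⟩ hx
    simp only [mem_sigma] at hx
    exact (matchingWeight_insert_sortedPair hsym
      (notMem_mVerts_of_mem_matchings_erase_erase hx.2)).symm

theorem mu_eq_X_sub_C_mul_add_sum (hsym : ∀ j k, lam j k = lam k j) (hi : i ∈ A) :
    mu r lam A = (X - C (r i)) * mu r lam (A.erase i) +
      ∑ j ∈ A.erase i, C (lam i j) * mu r lam ((A.erase i).erase j) := by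
  rw [← sum_matchingWeight_notMem hi, ← sum_matchingWeight_mem hsym hi, add_comm]
  exact (sum_filter_add_sum_filter_not _ _ _).symm

end Matchings

section RootMultiplicity

open Finset

variable {n : ℕ} {r : Fin n → ℝ} {lam : Fin n → Fin n → ℝ} {A : Finset (Fin n)} {i j : Fin n}

lemma mu_empty : mu r lam ∅ = 1 := by
  have : matchings lam (∅ : Finset (Fin n)) = {∅} := by
    ext M
    simp only [mem_singleton, mem_matchings, IsMatching, notMem_empty, and_false, imp_false]
    constructor
    · exact fun h => eq_empty_of_forall_notMem fun e he => h.1 e he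
    · rintro rfl
      simp
  simp [mu, this]

lemma aeval_mu_eq (hsym : ∀ j k, lam j k = lam k j) (hi : i ∈ A) (z : ℂ) :
    aeval z (mu r lam A) = (z - r i) * aeval z (mu r lam (A.erase i)) +
      ∑ j ∈ A.erase i, lam i j * aeval z (mu r lam ((A.erase i).erase j)) := by
  rw [mu_eq_X_sub_C_mul_add_sum hsym hi]
  simp

lemma aeval_mu_ne_zero_of_forall_im_le {z : ℂ} (hz : 0 < z.im)
    (h : ∀ j ∈ A, z.im ≤ (aeval z (mu r lam A) / aeval z (mu r lam (A.erase j))).im) :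
    aeval z (mu r lam A) ≠ 0 := by
  rcases A.eq_empty_or_nonempty with rfl | ⟨j, hj⟩
  · simp [mu_empty]
  · intro h0
    have := h j hj
    rw [h0, zero_div, Complex.zero_im] at this
    linarith

lemma im_le_im_aeval_mu_div_of_erase (hsym : ∀ j k, lam j k = lam k j)
    (hnonpos : ∀ j k, lam j k ≤ 0) (hi : i ∈ A) {z : ℂ} (hz : 0 < z.im)
    (h : ∀ j ∈ A.erase i, z.im ≤ (aeval z (mu r lam (A.erase i)) /
      aeval z (mu r lam ((A.erase i).erase j))).im) :
    z.im ≤ (aeval z (mu r lam A) / aeval z (mu r lam (A.erase i))).im := by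
  have h0 := aeval_mu_ne_zero_of_forall_im_le hz h
  have hquot : aeval z (mu r lam A) / aeval z (mu r lam (A.erase i)) = (z - r i) +
      ∑ j ∈ A.erase i, (lam i j : ℂ) / (aeval z (mu r lam (A.erase i)) /
        aeval z (mu r lam ((A.erase i).erase j))) := by
    rw [aeval_mu_eq hsym hi, add_div, mul_div_cancel_right₀ _ h0, sum_div]
    simp only [div_div_eq_mul_div, mul_div_assoc]
  rw [hquot, Complex.add_im, Complex.sub_im, Complex.ofReal_im, sub_zero, Complex.im_sum]
  refine le_add_of_nonneg_right (sum_nonneg fun j hj => ?_)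
  exact Complex.im_ofReal_div_nonneg (hnonpos i j) (hz.le.trans (h j hj))

theorem im_le_im_aeval_mu_div (hsym : ∀ j k, lam j k = lam k j)
    (hnonpos : ∀ j k, lam j k ≤ 0) {z : ℂ} (hz : 0 < z.im) (A : Finset (Fin n)) :
    ∀ i ∈ A, z.im ≤ (aeval z (mu r lam A) / aeval z (mu r lam (A.erase i))).im := by
  induction A using Finset.strongInduction with
  | H A ih =>
    exact fun i hi => im_le_im_aeval_mu_div_of_erase hsym hnonpos hi hz
      (ih _ (erase_ssubset hi))

lemma im_aeval_mu_div_pos (hsym : ∀ j k, lam j k = lam k j) (hnonpos : ∀ j k, lam j k ≤ 0)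
    (hi : i ∈ A) {z : ℂ} (hz : 0 < z.im) :
    0 < (aeval z (mu r lam A) / aeval z (mu r lam (A.erase i))).im :=
  hz.trans_le (im_le_im_aeval_mu_div hsym hnonpos hz A i hi)

lemma im_aeval_neg_mu_erase_div_pos (hsym : ∀ j k, lam j k = lam k j)
    (hnonpos : ∀ j k, lam j k ≤ 0) (hi : i ∈ A) {z : ℂ} (hz : 0 < z.im) :
    0 < (aeval z (-mu r lam (A.erase i)) / aeval z (mu r lam A)).im := by
  have hw := im_aeval_mu_div_pos (r := r) hsym hnonpos hi hz
  have hw0 : aeval z (mu r lam A) / aeval z (mu r lam (A.erase i)) ≠ 0 := by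
    rintro h
    rw [h, Complex.zero_im] at hw
    exact hw.false
  rw [map_neg, neg_div, Complex.neg_im, ← inv_div, Complex.inv_im, neg_div, neg_neg]
  exact div_pos hw (Complex.normSq_pos.2 hw0)

lemma mu_ne_zero (hsym : ∀ j k, lam j k = lam k j) (hnonpos : ∀ j k, lam j k ≤ 0)
    (hi : i ∈ A) : mu r lam A ≠ 0 :=
  (ne_zero_of_forall_im_div_pos fun _ hz => im_aeval_mu_div_pos hsym hnonpos hi hz).1

theorem rootMultiplicity_mu_le_erase_add_one (hsym : ∀ j k, lam j k = lam k j)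
    (hnonpos : ∀ j k, lam j k ≤ 0) (hi : i ∈ A) (θ : ℝ) :
    (mu r lam A).rootMultiplicity θ ≤ (mu r lam (A.erase i)).rootMultiplicity θ + 1 :=
  rootMultiplicity_le_add_one_of_forall_im_div_pos
    (fun _ hz => im_aeval_mu_div_pos hsym hnonpos hi hz) θ

theorem rootMultiplicity_mu_erase_le_add_one (hsym : ∀ j k, lam j k = lam k j)
    (hnonpos : ∀ j k, lam j k ≤ 0) (hi : i ∈ A) (θ : ℝ) :
    (mu r lam (A.erase i)).rootMultiplicity θ ≤ (mu r lam A).rootMultiplicity θ + 1 := by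
  simpa only [rootMultiplicity_neg] using rootMultiplicity_le_add_one_of_forall_im_div_pos
    (fun _ hz => im_aeval_neg_mu_erase_div_pos (r := r) hsym hnonpos hi hz) θ

lemma trailingCoeff_taylor_mu_mul_coeff_nonneg (hsym : ∀ j k, lam j k = lam k j)
    (hnonpos : ∀ j k, lam j k ≤ 0) (hj : j ∈ A) {θ : ℝ} {N : ℕ}
    (hN : (mu r lam A).rootMultiplicity θ = N + 1) :
    0 ≤ (taylor θ (mu r lam A)).trailingCoeff * (taylor θ (mu r lam (A.erase j))).coeff N := by
  have hle := rootMultiplicity_mu_le_erase_add_one (r := r) hsym hnonpos hj θ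
  rcases (show N ≤ (mu r lam (A.erase j)).rootMultiplicity θ by omega).eq_or_lt with hjN | hjN
  · rw [hjN, taylor_coeff_rootMultiplicity]
    exact (trailingCoeff_taylor_mul_pos_of_forall_im_div_pos
      (fun _ hz => im_aeval_mu_div_pos hsym hnonpos hj hz) (by omega)).le
  · rw [taylor_coeff_eq_zero_of_pow_dvd (pow_rootMultiplicity_dvd _ _) hjN, mul_zero]

lemma taylor_coeff_mu_eq_sum (hsym : ∀ j k, lam j k = lam k j) (hi : i ∈ A) {θ : ℝ} {N : ℕ}
    (hN : N < (mu r lam (A.erase i)).rootMultiplicity θ) :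
    (taylor θ (mu r lam A)).coeff N =
      ∑ j ∈ A.erase i, lam i j * (taylor θ (mu r lam ((A.erase i).erase j))).coeff N := by
  rw [mu_eq_X_sub_C_mul_add_sum hsym hi, map_add, coeff_add,
    taylor_coeff_eq_zero_of_pow_dvd (dvd_mul_of_dvd_right (pow_rootMultiplicity_dvd _ _) _) hN,
    zero_add, map_sum, finsetSum_coeff]
  simp only [taylor_mul, taylor_C, coeff_C_mul]

theorem taylor_coeff_mu_ne_zero (hsym : ∀ j k, lam j k = lam k j)
    (hnonpos : ∀ j k, lam j k ≤ 0) (hi : i ∈ A) (hj : j ∈ A.erase i) (hlam : lam i j ≠ 0)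
    {θ : ℝ} {N : ℕ} (hN : (mu r lam (A.erase i)).rootMultiplicity θ = N + 1)
    (hjN : (mu r lam ((A.erase i).erase j)).rootMultiplicity θ = N) :
    (taylor θ (mu r lam A)).coeff N ≠ 0 := by
  set c := (taylor θ (mu r lam (A.erase i))).trailingCoeff
  suffices c * (taylor θ (mu r lam A)).coeff N < 0 from fun h => by simp [h] at this
  rw [taylor_coeff_mu_eq_sum hsym hi (by omega), mul_sum, ← sum_const_zero]
  rw [sum_congr rfl fun k _ => mul_left_comm c (lam i k) _]
  refine sum_lt_sum (fun k hk => mul_nonpos_of_nonpos_of_nonneg (hnonpos i k)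
    (trailingCoeff_taylor_mu_mul_coeff_nonneg hsym hnonpos hk hN)) ⟨j, hj, ?_⟩
  refine mul_neg_of_neg_of_pos ((hnonpos i j).lt_of_ne hlam) ?_
  rw [← hjN, taylor_coeff_rootMultiplicity]
  exact trailingCoeff_taylor_mul_pos_of_forall_im_div_pos
    (fun _ hz => im_aeval_mu_div_pos hsym hnonpos hj hz) (by omega)

theorem rootMultiplicity_mu_erase_eq_add_one_iff (hsym : ∀ j k, lam j k = lam k j)
    (hnonpos : ∀ j k, lam j k ≤ 0) (hi : i ∈ A) (θ : ℝ) :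
    (mu r lam (A.erase i)).rootMultiplicity θ = (mu r lam A).rootMultiplicity θ + 1 ↔
      ∃ j ∈ A.erase i, lam i j ≠ 0 ∧ (mu r lam (A.erase i)).rootMultiplicity θ =
        (mu r lam ((A.erase i).erase j)).rootMultiplicity θ + 1 := by
  constructor
  · intro h
    have hA : (taylor θ (mu r lam A)).coeff ((mu r lam A).rootMultiplicity θ) ≠ 0 := by
      rw [taylor_coeff_rootMultiplicity]
      exact trailingCoeff_taylor_ne_zero (mu_ne_zero hsym hnonpos hi)
    rw [taylor_coeff_mu_eq_sum hsym hi (by omega)] at hA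
    obtain ⟨j, hj, hj0⟩ := exists_ne_zero_of_sum_ne_zero hA
    have hle := rootMultiplicity_le_of_taylor_coeff_ne_zero (right_ne_zero_of_mul hj0)
    have hge := rootMultiplicity_mu_le_erase_add_one (r := r) hsym hnonpos hj θ
    exact ⟨j, hj, left_ne_zero_of_mul hj0, by omega⟩
  · rintro ⟨j, hj, hlam, hjN⟩
    have hle := rootMultiplicity_le_of_taylor_coeff_ne_zero
      (taylor_coeff_mu_ne_zero hsym hnonpos hi hj hlam hjN rfl)
    have hge := rootMultiplicity_mu_erase_le_add_one (r := r) hsym hnonpos hi θ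
    omega

end RootMultiplicity

theorem stmt_8_general (n : ℕ) (r : Fin n → ℝ) (lam : Fin n → Fin n → ℝ)
    (hsym : ∀ j k, lam j k = lam k j) (hnonpos : ∀ j k, lam j k ≤ 0)
    (i : Fin n) (θ : ℝ) :
    (mu r lam ((Finset.univ : Finset (Fin n)).erase i)).rootMultiplicity θ =
        (mu r lam Finset.univ).rootMultiplicity θ + 1 ↔
      ∃ j : Fin n, j ≠ i ∧ lam i j ≠ 0 ∧
        (mu r lam (Finset.univ.erase i)).rootMultiplicity θ =
          (mu r lam ((Finset.univ.erase i).erase j)).rootMultiplicity θ + 1 := by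
  simpa only [Finset.mem_erase, Finset.mem_univ, and_true, and_assoc] using
    rootMultiplicity_mu_erase_eq_add_one_iff (r := r) hsym hnonpos (Finset.mem_univ i) θ

/-- `m_θ(G∖i) = m_θ(G) + 1` iff some neighbor `j` of `i` satisfies
`m_θ(G∖{i,j}) = m_θ(G∖i) − 1`. -/
theorem stmt_8 (n : ℕ) (hn : 0 < n) (r : Fin n → ℝ) (lam : Fin n → Fin n → ℝ)
    (hsym : ∀ j k, lam j k = lam k j) (hnonpos : ∀ j k, lam j k ≤ 0)
    (hdiag : ∀ i, lam i i = 0) (i : Fin n) (θ : ℝ) :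
    (mu r lam ((Finset.univ : Finset (Fin n)).erase i)).rootMultiplicity θ =
        (mu r lam Finset.univ).rootMultiplicity θ + 1 ↔
      ∃ j : Fin n, j ≠ i ∧ lam i j ≠ 0 ∧
        (mu r lam (Finset.univ.erase i)).rootMultiplicity θ =
          (mu r lam ((Finset.univ.erase i).erase j)).rootMultiplicity θ + 1 :=
  stmt_8_general n r lam hsym hnonpos i θ
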